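/- For every linear predictor of the form w = [w1, w2, 0_d] ∈ ℝ^{3d} with (w1, w2) ≠ (0, 0), the accuracy of w on the context-c2 distribution equals 0.5 · erfc( −((w1 − w2)ᵀμ) / (σ·√(2(‖w1‖₂² + (1/γ)‖w2‖₂²))) ). -/

import Mathlib

open MeasureTheory ProbabilityTheory Real Filter
open scoped ENNReal NNReal

noncomputable section

/-- Complementary error function `erfc x = (2/√π) ∫_x^∞ e^{−t²} dt`. -/
def erfc (x : ℝ) : ℝ := 2 / Real.sqrt Real.pi * ∫ t in Set.Ioi x, Real.exp (-t ^ 2)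

/-- A vector in `ℝ^d`. -/
abbrev Vec (d : ℕ) := Fin d → ℝ

/-- The input space `ℝ^{3d}`, viewed as three blocks `x = [x1, x2, x3]`. -/
abbrev Inp (d : ℕ) := Vec d × Vec d × Vec d

/-- Euclidean dot product on `ℝ^d`. -/
def dot {d : ℕ} (v w : Vec d) : ℝ := ∑ i, v i * w i

/-- Euclidean norm on `ℝ^d`. -/
def vnorm {d : ℕ} (v : Vec d) : ℝ := Real.sqrt (∑ i, v i ^ 2)

/-- Euclidean norm on the full input space `ℝ^{3d}`. -/
def xnorm {d : ℕ} (x : Inp d) : ℝ :=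
  Real.sqrt ((∑ i, x.1 i ^ 2) + (∑ i, x.2.1 i ^ 2) + ∑ i, x.2.2 i ^ 2)

/-- Value `wᵀx` of the linear predictor `w` at input `x`. -/
def pred {d : ℕ} (w x : Inp d) : ℝ := dot w.1 x.1 + dot w.2.1 x.2.1 + dot w.2.2 x.2.2

/-- Isotropic Gaussian `N(m, v·I_d)` on `ℝ^d` (product of coordinate Gaussians). -/
def gaussVec (d : ℕ) (m : Vec d) (v : ℝ) : Measure (Vec d) :=
  Measure.pi fun i => gaussianReal (m i) (Real.toNNReal v)

/-- Conditional law of `x` given the label `y` in context `c1`: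
`x1 ~ N(μy, σ²I)`, `x2 ~ N(μy, γσ²I)`, `x3 ~ N(μ, η²I)`, independent blocks. -/
def condX1 (d : ℕ) (μ : Vec d) (σ γ η : ℝ) (y : ℝ) : Measure (Inp d) :=
  (gaussVec d (fun i => μ i * y) (σ ^ 2)).prod
    ((gaussVec d (fun i => μ i * y) (γ * σ ^ 2)).prod
      (gaussVec d μ (η ^ 2)))

/-- Conditional law of `x` given the label `y` in context `c2`:
`x1 ~ N(μy, σ²I)`, `x2 ~ N(−μy, (σ²/γ)I)`, `x3 ~ N(−μ, η²I)`, independent blocks. -/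
def condX2 (d : ℕ) (μ : Vec d) (σ γ η : ℝ) (y : ℝ) : Measure (Inp d) :=
  (gaussVec d (fun i => μ i * y) (σ ^ 2)).prod
    ((gaussVec d (fun i => -μ i * y) (σ ^ 2 / γ)).prod
      (gaussVec d (fun i => -μ i) (η ^ 2)))

/-- Joint law of `(x, y)`: `y` uniform on `{−1, 1}`, then `x ~ cond y`. -/
def jointOf {d : ℕ} (cond : ℝ → Measure (Inp d)) : Measure (Inp d × ℝ) :=
  (2 : ℝ≥0∞)⁻¹ • (cond 1).prod (Measure.dirac (1 : ℝ))
    + (2 : ℝ≥0∞)⁻¹ • (cond (-1)).prod (Measure.dirac (-1 : ℝ))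

/-- The context-`c1` distribution over `(x, y)`. -/
def Pc1 (d : ℕ) (μ : Vec d) (σ γ η : ℝ) : Measure (Inp d × ℝ) :=
  jointOf (condX1 d μ σ γ η)

/-- The context-`c2` distribution over `(x, y)`. -/
def Pc2 (d : ℕ) (μ : Vec d) (σ γ η : ℝ) : Measure (Inp d × ℝ) :=
  jointOf (condX2 d μ σ γ η)

/-- Accuracy `Acc_P(w) = P(sign(wᵀx) = y)` of linear predictor `w` under joint law `P`. -/
def AccP {d : ℕ} (P : Measure (Inp d × ℝ)) (w : Inp d) : ℝ :=
  (P {p | Real.sign (pred w p.1) = p.2}).toReal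

/-- Norm-bounded linear predictors `W1 = {w ∈ ℝ^{3d} : ‖w‖₂ ≤ 1}`. -/
def W1 (d : ℕ) : Set (Inp d) := {w | xnorm w ≤ 1}

/-- Population exponential loss `E_P[exp(−y·wᵀx)]`. -/
def expLoss {d : ℕ} (P : Measure (Inp d × ℝ)) (w : Inp d) : ℝ :=
  ∫ p, Real.exp (-(p.2 * pred w p.1)) ∂P

end

/-! Since `w` ignores `x3`, given `y` the score `wᵀx = w1ᵀx1 + w2ᵀx2` is a sum of independent
Gaussians, hence `N(y·(w1 − w2)ᵀμ, σ²(‖w1‖² + ‖w2‖²/γ))`. Reflecting `t ↦ −t` shows that both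
labels are classified correctly with the same probability `P(N(m, v) > 0)`, and the affine change
of variables `t ↦ m + √(2v)·t` from `N(0, 1/2)`, whose density is `e^{−t²}/√π`, turns this into
`½ erfc(−m/√(2v))`. -/

lemma map_sum_pi_gaussianReal {ι : Type*} [Fintype ι] (m : ι → ℝ) (v : ι → ℝ≥0) :
    (Measure.pi fun i => gaussianReal (m i) (v i)).map (fun x => ∑ i, x i)
      = gaussianReal (∑ i, m i) (∑ i, v i) := by
  refine Measure.ext_of_charFun (funext fun t => ?_)
  rw [charFun_map_sum_pi_eq_prod, Finset.prod_apply, charFun_gaussianReal]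
  simp_rw [charFun_gaussianReal, ← Complex.exp_sum]
  push_cast
  rw [Finset.mul_sum, Finset.sum_mul, Finset.sum_mul, Finset.sum_div,
    Finset.sum_sub_distrib]

lemma map_weightedSum_pi_gaussianReal {ι : Type*} [Fintype ι] (c m : ι → ℝ) (v : ι → ℝ≥0) :
    (Measure.pi fun i => gaussianReal (m i) (v i)).map (fun x => ∑ i, c i * x i)
      = gaussianReal (∑ i, c i * m i) (∑ i, ⟨c i ^ 2, sq_nonneg _⟩ * v i) := by
  have hscale : Measurable fun (x : ι → ℝ) i => c i * x i := by fun_prop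
  have hcomp : (fun x : ι → ℝ => ∑ i, c i * x i) = (fun y => ∑ i, y i) ∘ fun x i => c i * x i :=
    rfl
  rw [hcomp, ← Measure.map_map (by fun_prop) hscale,
    Measure.pi_map_pi fun i => (measurable_const_mul (c i)).aemeasurable]
  simp_rw [gaussianReal_map_const_mul]
  exact map_sum_pi_gaussianReal _ _

lemma MeasureTheory.Measure.map_prod_add_eq_conv {α β G : Type*} [MeasurableSpace α]
    [MeasurableSpace β] [AddMonoid G] [MeasurableSpace G] [MeasurableAdd₂ G]
    (μ : Measure α) (ν : Measure β) [SFinite μ] [SFinite ν]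
    {f : α → G} {g : β → G} (hf : Measurable f) (hg : Measurable g) :
    (μ.prod ν).map (fun p => f p.1 + g p.2) = μ.map f ∗ ν.map g := by
  rw [Measure.conv, Measure.map_prod_map _ _ hf hg, Measure.map_map measurable_add (hf.prodMap hg)]
  rfl

open Set

lemma gaussianPDFReal_zero_inv_two (x : ℝ) :
    gaussianPDFReal 0 2⁻¹ x = (√π)⁻¹ * rexp (-x ^ 2) := by
  rw [gaussianPDFReal, NNReal.coe_inv, NNReal.coe_ofNat, sub_zero,
    show 2 * π * 2⁻¹ = π by ring, show (2 : ℝ) * 2⁻¹ = 1 by norm_num, div_one]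

lemma gaussianReal_eq_map_affine (m : ℝ) (v : ℝ≥0) :
    gaussianReal m v = (gaussianReal 0 2⁻¹).map (fun t => m + √(2 * v) * t) := by
  have hcomp : (fun t => m + √(2 * v) * t) = (m + ·) ∘ (√(2 * v) * ·) := rfl
  rw [hcomp, ← Measure.map_map (by fun_prop) (by fun_prop), gaussianReal_map_const_mul,
    gaussianReal_map_const_add]
  congr 1
  · simp
  · ext
    simp only [NNReal.coe_mk, NNReal.coe_mul, NNReal.coe_inv, NNReal.coe_ofNat]
    rw [Real.sq_sqrt (by positivity)]
    ring

lemma toReal_gaussianReal_Ioi_zero (m : ℝ) {v : ℝ≥0} (hv : v ≠ 0) :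
    (gaussianReal m v (Ioi 0)).toReal = 0.5 * erfc (-m / √(2 * v)) := by
  have hs : 0 < √(2 * v) := Real.sqrt_pos.2 (by positivity)
  have hpre : (fun t => m + √(2 * v) * t) ⁻¹' Ioi 0 = Ioi (-m / √(2 * v)) := by
    ext t
    simp only [mem_preimage, mem_Ioi, div_lt_iff₀ hs]
    constructor <;> intro h <;> linarith
  rw [gaussianReal_eq_map_affine m v, Measure.map_apply (by fun_prop) measurableSet_Ioi, hpre,
    gaussianReal_apply_eq_integral _ (by norm_num),
    ENNReal.toReal_ofReal (integral_nonneg fun x => gaussianPDFReal_nonneg _ _ _)]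
  simp_rw [gaussianPDFReal_zero_inv_two]
  rw [integral_const_mul, erfc]
  ring

lemma gaussianReal_neg_Iio_zero (m : ℝ) (v : ℝ≥0) :
    gaussianReal (-m) v (Iio 0) = gaussianReal m v (Ioi 0) := by
  rw [← gaussianReal_map_neg, Measure.map_apply measurable_neg measurableSet_Iio]
  congr 1
  ext x
  simp

lemma Real.sign_eq_one_iff {r : ℝ} : Real.sign r = 1 ↔ 0 < r := by
  rcases lt_trichotomy r 0 with h | rfl | h
  · norm_num [Real.sign_of_neg h, h.not_gt]
  · simp [Real.sign_zero]
  · simp [Real.sign_of_pos h, h]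

lemma Real.sign_eq_neg_one_iff {r : ℝ} : Real.sign r = -1 ↔ r < 0 := by
  rcases lt_trichotomy r 0 with h | rfl | h
  · simp [Real.sign_of_neg h, h]
  · simp [Real.sign_zero]
  · norm_num [Real.sign_of_pos h, h.not_gt]

instance {d : ℕ} (m : Vec d) (v : ℝ) : IsProbabilityMeasure (gaussVec d m v) := by
  unfold gaussVec
  infer_instance

@[fun_prop]
lemma measurable_dot {d : ℕ} (w : Vec d) : Measurable (dot w) := by
  unfold dot
  fun_prop

lemma measurable_pred {d : ℕ} (w : Inp d) : Measurable (pred w) := by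
  unfold pred
  fun_prop

lemma map_dot_gaussVec {d : ℕ} (w m : Vec d) (v : ℝ) :
    (gaussVec d m v).map (dot w) = gaussianReal (dot w m) (vnorm w ^ 2 * v).toNNReal := by
  rw [gaussVec, show dot w = fun x => ∑ i, w i * x i from rfl, map_weightedSum_pi_gaussianReal]
  congr 1
  ext
  rw [NNReal.coe_sum, vnorm, Real.sq_sqrt (by positivity), Real.toNNReal_mul (by positivity),
    NNReal.coe_mul, Real.coe_toNNReal _ (by positivity), Finset.sum_mul]
  rfl

lemma map_pred_prod_gaussVec {d : ℕ} (w : Inp d) (m₁ m₂ m₃ : Vec d) (v₁ v₂ v₃ : ℝ) :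
    ((gaussVec d m₁ v₁).prod ((gaussVec d m₂ v₂).prod (gaussVec d m₃ v₃))).map (pred w)
      = gaussianReal (dot w.1 m₁ + dot w.2.1 m₂ + dot w.2.2 m₃)
          ((vnorm w.1 ^ 2 * v₁).toNNReal + (vnorm w.2.1 ^ 2 * v₂).toNNReal
            + (vnorm w.2.2 ^ 2 * v₃).toNNReal) := by
  have hpred : pred w = fun x => dot w.1 x.1 + (dot w.2.1 x.2.1 + dot w.2.2 x.2.2) := by
    funext x
    exact add_assoc _ _ _
  rw [hpred, Measure.map_prod_add_eq_conv (f := dot w.1)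
      (g := fun y : Vec d × Vec d => dot w.2.1 y.1 + dot w.2.2 y.2) _ _ (by fun_prop) (by fun_prop),
    Measure.map_prod_add_eq_conv _ _ (measurable_dot _) (measurable_dot _)]
  simp only [map_dot_gaussVec, gaussianReal_conv_gaussianReal, add_assoc]

lemma accP_jointOf {d : ℕ} (cond : ℝ → Measure (Inp d)) [∀ y, SFinite (cond y)] (w : Inp d) :
    AccP (jointOf cond) w
      = (2⁻¹ * (cond 1).map (pred w) (Ioi 0) + 2⁻¹ * (cond (-1)).map (pred w) (Iio 0)).toReal := by
  have hpos : (fun x => (x, (1 : ℝ))) ⁻¹' {p : Inp d × ℝ | Real.sign (pred w p.1) = p.2}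
      = pred w ⁻¹' Ioi 0 := by
    ext
    simp [Real.sign_eq_one_iff]
  have hneg : (fun x => (x, (-1 : ℝ))) ⁻¹' {p : Inp d × ℝ | Real.sign (pred w p.1) = p.2}
      = pred w ⁻¹' Iio 0 := by
    ext
    simp [Real.sign_eq_neg_one_iff]
  rw [AccP, jointOf, Measure.add_apply, Measure.smul_apply, Measure.smul_apply,
    Measure.prod_dirac, Measure.prod_dirac, (measurableEmbedding_prod_mk_right _).map_apply,
    (measurableEmbedding_prod_mk_right _).map_apply, hpos, hneg,
    Measure.map_apply (measurable_pred w) measurableSet_Ioi,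
    Measure.map_apply (measurable_pred w) measurableSet_Iio]
  rfl

lemma vnorm_sq_pos {d : ℕ} {w : Vec d} (hw : w ≠ 0) : 0 < vnorm w ^ 2 := by
  obtain ⟨i, hi⟩ := Function.ne_iff.mp hw
  rw [vnorm, Real.sq_sqrt (by positivity)]
  exact Finset.sum_pos' (fun j _ => sq_nonneg _)
    ⟨i, Finset.mem_univ _, pow_two_pos_of_ne_zero hi⟩

instance {d : ℕ} (μ : Vec d) (σ γ η y : ℝ) : IsProbabilityMeasure (condX2 d μ σ γ η y) := by
  unfold condX2
  infer_instance

lemma map_pred_condX2 {d : ℕ} (μ : Vec d) (σ : ℝ) {γ : ℝ} (hγ : 0 ≤ γ) (η : ℝ) (w1 w2 : Vec d)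
    (y : ℝ) :
    (condX2 d μ σ γ η y).map (pred (w1, w2, 0))
      = gaussianReal (y * dot (w1 - w2) μ)
          (σ ^ 2 * (vnorm w1 ^ 2 + 1 / γ * vnorm w2 ^ 2)).toNNReal := by
  rw [condX2, map_pred_prod_gaussVec]
  congr 1
  · simp only [dot, Pi.sub_apply, Pi.zero_apply, zero_mul, Finset.sum_const_zero, add_zero,
      Finset.mul_sum, ← Finset.sum_add_distrib]
    exact Finset.sum_congr rfl fun i _ => by ring
  · have hzero : vnorm (0 : Vec d) = 0 := by simp [vnorm]
    rw [hzero, zero_pow two_ne_zero, zero_mul, Real.toNNReal_zero, add_zero,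
      ← Real.toNNReal_add (by positivity) (by positivity)]
    congr 1
    ring

theorem accuracy_formula_context_c2_general (d : ℕ) (μ : Vec d)
    (σ γ η : ℝ) (hσ : 0 < σ) (hγ : 0 < γ)
    (w1 w2 : Vec d) (hw : ¬(w1 = 0 ∧ w2 = 0)) :
    AccP (Pc2 d μ σ γ η) (w1, w2, (0 : Vec d)) =
      0.5 * erfc (-(dot (w1 - w2) μ) /
        (σ * Real.sqrt (2 * (vnorm w1 ^ 2 + (1 / γ) * vnorm w2 ^ 2)))) := by
  set S := vnorm w1 ^ 2 + 1 / γ * vnorm w2 ^ 2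
  have hS : 0 < S := by
    have h1 := sq_nonneg (vnorm w1)
    have h2 : 0 ≤ 1 / γ * vnorm w2 ^ 2 := by positivity
    rcases not_and_or.mp hw with h | h
    · linarith [vnorm_sq_pos h]
    · linarith [mul_pos (one_div_pos.2 hγ) (vnorm_sq_pos h)]
  have hV : 0 < σ ^ 2 * S := by positivity
  rw [Pc2, accP_jointOf, map_pred_condX2 μ σ hγ.le η, map_pred_condX2 μ σ hγ.le η, one_mul,
    neg_one_mul, gaussianReal_neg_Iio_zero, ← add_mul, ENNReal.inv_two_add_inv_two, one_mul,
    toReal_gaussianReal_Ioi_zero _ (Real.toNNReal_pos.2 hV).ne', Real.coe_toNNReal _ hV.le,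
    mul_left_comm, Real.sqrt_mul (by positivity), Real.sqrt_sq hσ.le]

theorem accuracy_formula_context_c2 (d : ℕ) (hd : 1 ≤ d) (μ : Vec d) (hμ : μ ≠ 0)
    (σ γ η : ℝ) (hσ : 0 < σ) (hγ : 0 < γ) (hη : 0 < η)
    (w1 w2 : Vec d) (hw : ¬(w1 = 0 ∧ w2 = 0)) :
    AccP (Pc2 d μ σ γ η) (w1, w2, (0 : Vec d)) =
      0.5 * erfc (-(dot (w1 - w2) μ) /
        (σ * Real.sqrt (2 * (vnorm w1 ^ 2 + (1 / γ) * vnorm w2 ^ 2)))) :=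
  accuracy_formula_context_c2_general d μ σ γ η hσ hγ w1 w2 hw
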